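/- Uniqueness of the recovered equilibrium: let 1 < γ ≤ 2 and suppose constants c_j (j = 1..N) and positive weights w_j are such that for every admissible h (with h + c_j > 0 for all j), max_j(h+c_j)/min_j(h+c_j) < √γ. Then for any targets ρ̄ > 0 and (ρe)̄ > 0, there is at most one pair (h₀, K₀) with K₀ > 0 satisfying simultaneously ρ̄ = (1/Δx) Σ w_j (((γ-1)/(γK₀))(h₀+c_j))^(1/(γ-1)) and (ρe)̄ = (1/(γ-1)Δx) Σ w_j K₀^(-1/(γ-1)) (((γ-1)/γ)(h₀+c_j))^(γ/(γ-1)). -/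

import Mathlib

open Finset

/-! Write `S_p(h) = ∑ⱼ wⱼ (h + cⱼ)^p` and `α = 1/(γ-1)`. Both cell averages factor as a power of
`K₀` times `S_α(h₀)`, resp. `S_{α+1}(h₀)`, so their quotient eliminates `K₀` and pins down
`S_{α+1}(h₀) / S_α(h₀) = γ (ρe)̄ / ρ̄`. This ratio is strictly increasing in `h`: its derivative has
the sign of `(α+1) S_α² - α S_{α+1} S_{α-1}`, and pairing the terms of `S_{α+1} S_{α-1}` shows
`S_{α+1} S_{α-1} ≤ √γ S_α²`, while `α √γ < α γ = α + 1`. Hence `h₀` is unique, and then so is `K₀`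
by the density equation. -/

section WeightedPowerSum

variable {ι : Type*} [Fintype ι] (w c : ι → ℝ)

noncomputable def weightedPowerSum (p h : ℝ) : ℝ := ∑ j, w j * (h + c j) ^ p

variable {w c}

theorem weightedPowerSum_pos [Nonempty ι] (hw : ∀ j, 0 < w j) {p h : ℝ}
    (hh : ∀ j, 0 < h + c j) : 0 < weightedPowerSum w c p h :=
  sum_pos (fun j _ => mul_pos (hw j) (Real.rpow_pos_of_pos (hh j) p)) univ_nonempty

theorem hasDerivAt_weightedPowerSum {p h : ℝ} (hh : ∀ j, 0 < h + c j) :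
    HasDerivAt (weightedPowerSum w c p) (p * weightedPowerSum w c (p - 1) h) h := by
  unfold weightedPowerSum
  rw [mul_sum]
  refine HasDerivAt.fun_sum fun j _ => ?_
  exact ((((hasDerivAt_id' h).add_const (c j)).rpow_const (p := p)
    (Or.inl (hh j).ne')).const_mul (w j)).congr_deriv (by ring)

theorem sum_mul_rpow_mul_eq {a p h : ℝ} (ha : 0 ≤ a) (hh : ∀ j, 0 ≤ h + c j) :
    ∑ j, w j * (a * (h + c j)) ^ p = a ^ p * weightedPowerSum w c p h := by
  rw [weightedPowerSum, mul_sum]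
  refine sum_congr rfl fun j _ => ?_
  rw [Real.mul_rpow ha (hh j)]
  ring

end WeightedPowerSum

/-- Pair the `(j, k)` term of the left-hand side with that of `(∑ⱼ wⱼ xⱼ^p)²`: they differ by the
factor `xⱼ / xₖ ≤ r`. -/
theorem sum_rpow_add_one_mul_sum_rpow_sub_one_le {ι : Type*} [Fintype ι] {w x : ι → ℝ} {p r : ℝ}
    (hw : ∀ j, 0 ≤ w j) (hx : ∀ j, 0 < x j) (hr : ∀ j k, x j ≤ r * x k) :
    (∑ j, w j * x j ^ (p + 1)) * (∑ j, w j * x j ^ (p - 1)) ≤ r * (∑ j, w j * x j ^ p) ^ 2 := by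
  rw [sq, sum_mul_sum, sum_mul_sum, mul_sum]
  refine sum_le_sum fun j _ => ?_
  rw [mul_sum]
  refine sum_le_sum fun k _ => ?_
  have hj := hx j
  have hk := hx k
  have hwj := hw j
  have hwk := hw k
  have hjk : x j / x k ≤ r := (div_le_iff₀ hk).2 (hr j k)
  calc w j * x j ^ (p + 1) * (w k * x k ^ (p - 1))
      = w j * x j ^ p * (w k * x k ^ p) * (x j / x k) := by
        rw [Real.rpow_add hj, Real.rpow_sub hk, Real.rpow_one, Real.rpow_one]
        field_simp
    _ ≤ w j * x j ^ p * (w k * x k ^ p) * r := by gcongr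
    _ = r * (w j * x j ^ p * (w k * x k ^ p)) := by ring

theorem strictMonoOn_weightedPowerSum_div {ι : Type*} [Fintype ι] [Nonempty ι] {w c : ι → ℝ}
    (hw : ∀ j, 0 < w j) {p r : ℝ} (hp : 0 ≤ p) (hpr : p * r < p + 1)
    (hr : ∀ h, (∀ j, 0 < h + c j) → ∀ j k, h + c j ≤ r * (h + c k)) :
    StrictMonoOn (fun h => weightedPowerSum w c (p + 1) h / weightedPowerSum w c p h)
      {h | ∀ j, 0 < h + c j} := by
  have hconvex : Convex ℝ {h : ℝ | ∀ j, 0 < h + c j} :=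
    Set.OrdConnected.convex ⟨fun x hx _ _ z hz j => by linarith [hx j, hz.1]⟩
  have hderiv : ∀ h, (∀ j, 0 < h + c j) → HasDerivAt
      (fun h => weightedPowerSum w c (p + 1) h / weightedPowerSum w c p h)
      (((p + 1) * weightedPowerSum w c p h * weightedPowerSum w c p h -
          weightedPowerSum w c (p + 1) h * (p * weightedPowerSum w c (p - 1) h)) /
        weightedPowerSum w c p h ^ 2) h := fun h hh => by
    simpa only [add_sub_cancel_right] using
      (hasDerivAt_weightedPowerSum (p := p + 1) hh).fun_div (hasDerivAt_weightedPowerSum hh)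
        (weightedPowerSum_pos hw hh).ne'
  refine strictMonoOn_of_deriv_pos hconvex
    (fun h hh => (hderiv h hh).continuousAt.continuousWithinAt) fun h hint => ?_
  have hh : ∀ j, 0 < h + c j := interior_subset hint
  rw [(hderiv h hh).deriv]
  have hS := weightedPowerSum_pos (p := p) hw hh
  have hpair : weightedPowerSum w c (p + 1) h * weightedPowerSum w c (p - 1) h ≤
      r * weightedPowerSum w c p h ^ 2 :=
    sum_rpow_add_one_mul_sum_rpow_sub_one_le (fun j => (hw j).le) hh (hr h hh)
  have hgap : p * r * weightedPowerSum w c p h ^ 2 < (p + 1) * weightedPowerSum w c p h ^ 2 :=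
    mul_lt_mul_of_pos_right hpr (by positivity)
  have hscaled := mul_le_mul_of_nonneg_left hpair hp
  apply div_pos _ (by positivity)
  nlinarith

theorem weightedPowerSum_div_eq_of_cellAverages {ι : Type*} [Fintype ι] {w c : ι → ℝ}
    {γ Δx ρbar ρebar h K : ℝ} (hγ : 1 < γ) (hK : 0 < K) (hh : ∀ j, 0 < h + c j)
    (hρ : ρbar ≠ 0)
    (eρ : ρbar = (1 / Δx) *
        ∑ j, w j * ((γ - 1) / (γ * K) * (h + c j)) ^ (1 / (γ - 1)))
    (eE : ρebar = (1 / ((γ - 1) * Δx)) *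
        ∑ j, w j * K ^ (-(1 / (γ - 1))) * ((γ - 1) / γ * (h + c j)) ^ (γ / (γ - 1))) :
    weightedPowerSum w c (1 / (γ - 1) + 1) h / weightedPowerSum w c (1 / (γ - 1)) h =
      γ * ρebar / ρbar := by
  have hγ0 : 0 < γ - 1 := by linarith
  have hh' : ∀ j, 0 ≤ h + c j := fun j => (hh j).le
  have hβ : γ / (γ - 1) = 1 / (γ - 1) + 1 := by field_simp; ring
  set α := 1 / (γ - 1)
  have hdens : (γ - 1) / (γ * K) = (γ - 1) / γ * K⁻¹ := by field_simp
  simp_rw [mul_comm (w _) (K ^ (-α)), mul_assoc, ← mul_sum, hβ] at eE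
  rw [sum_mul_rpow_mul_eq (by positivity) hh', Real.rpow_add (by positivity),
    Real.rpow_one, Real.rpow_neg hK.le, ← Real.inv_rpow hK.le] at eE
  rw [sum_mul_rpow_mul_eq (by positivity) hh', hdens,
    Real.mul_rpow (by positivity) (by positivity)] at eρ
  obtain ⟨hΔx, hPS⟩ := mul_ne_zero_iff.1 (eρ ▸ hρ)
  have hS := (mul_ne_zero_iff.1 hPS).2
  have hΔx : Δx ≠ 0 := by simpa using hΔx
  have : 0 < ((γ - 1) / γ) ^ α := by positivity
  have : 0 < K⁻¹ ^ α := by positivity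
  rw [eρ, eE]
  field_simp

theorem stmt_19_general (γ : ℝ) (hγ1 : 1 < γ)
    (N : ℕ) (hN : 1 ≤ N) (w c : Fin N → ℝ)
    (hw : ∀ j, 0 < w j)
    (Δx : ℝ) (hΔx : 0 < Δx)
    (ρbar ρebar : ℝ) (hρbar : 0 < ρbar)
    (hratio : ∀ h, (∀ j, 0 < h + c j) →
      ∀ j k, h + c j < Real.sqrt γ * (h + c k)) :
    ∀ h₁ K₁ h₂ K₂ : ℝ, 0 < K₁ → 0 < K₂ →
      (∀ j, 0 < h₁ + c j) → (∀ j, 0 < h₂ + c j) →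
      ρbar = (1 / Δx) *
        ∑ j, w j * ((γ - 1) / (γ * K₁) * (h₁ + c j)) ^ (1 / (γ - 1)) →
      ρebar = (1 / ((γ - 1) * Δx)) *
        ∑ j, w j * K₁ ^ (-(1 / (γ - 1))) *
          ((γ - 1) / γ * (h₁ + c j)) ^ (γ / (γ - 1)) →
      ρbar = (1 / Δx) *
        ∑ j, w j * ((γ - 1) / (γ * K₂) * (h₂ + c j)) ^ (1 / (γ - 1)) →
      ρebar = (1 / ((γ - 1) * Δx)) *
        ∑ j, w j * K₂ ^ (-(1 / (γ - 1))) *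
          ((γ - 1) / γ * (h₂ + c j)) ^ (γ / (γ - 1)) →
      h₁ = h₂ ∧ K₁ = K₂ := by
  intro h₁ K₁ h₂ K₂ hK₁ hK₂ hh₁ hh₂ eρ₁ eE₁ eρ₂ eE₂
  have : Nonempty (Fin N) := Fin.pos_iff_nonempty.mp hN
  have hγ0 : 0 < γ - 1 := by linarith
  have hsqrt : Real.sqrt γ < γ := Real.sqrt_lt_self_iff.2 hγ1
  have hmono := strictMonoOn_weightedPowerSum_div hw (p := 1 / (γ - 1)) (by positivity)
    (by field_simp; linarith) fun h hh j k => (hratio h hh j k).le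
  obtain rfl : h₁ = h₂ := hmono.injOn hh₁ hh₂ <|
    (weightedPowerSum_div_eq_of_cellAverages hγ1 hK₁ hh₁ hρbar.ne' eρ₁ eE₁).trans
      (weightedPowerSum_div_eq_of_cellAverages hγ1 hK₂ hh₂ hρbar.ne' eρ₂ eE₂).symm
  refine ⟨rfl, ?_⟩
  have hh' : ∀ j, 0 ≤ h₁ + c j := fun j => (hh₁ j).le
  rw [sum_mul_rpow_mul_eq (by positivity) hh'] at eρ₁ eρ₂
  have hpow := mul_right_cancel₀ (weightedPowerSum_pos hw hh₁).ne'
    (mul_left_cancel₀ (one_div_ne_zero hΔx.ne') (eρ₁.symm.trans eρ₂))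
  rw [Real.rpow_left_inj (by positivity) (by positivity) (by positivity)] at hpow
  field_simp at hpow
  linarith

/-- Uniqueness of the recovered equilibrium `(h₀, K₀)` for the polytropic
ideal gas, under the variation bound `max_j(h+c_j)/min_j(h+c_j) < √γ` on
the whole admissible range, `1 < γ ≤ 2`. -/
theorem stmt_19 (γ : ℝ) (hγ1 : 1 < γ) (hγ2 : γ ≤ 2)
    (N : ℕ) (hN : 1 ≤ N) (w c : Fin N → ℝ)
    (hw : ∀ j, 0 < w j)
    (Δx : ℝ) (hΔx : 0 < Δx) (hsum : ∑ j, w j = Δx)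
    (ρbar ρebar : ℝ) (hρbar : 0 < ρbar) (hρebar : 0 < ρebar)
    (hratio : ∀ h, (∀ j, 0 < h + c j) →
      ∀ j k, h + c j < Real.sqrt γ * (h + c k)) :
    ∀ h₁ K₁ h₂ K₂ : ℝ, 0 < K₁ → 0 < K₂ →
      (∀ j, 0 < h₁ + c j) → (∀ j, 0 < h₂ + c j) →
      ρbar = (1 / Δx) *
        ∑ j, w j * ((γ - 1) / (γ * K₁) * (h₁ + c j)) ^ (1 / (γ - 1)) →
      ρebar = (1 / ((γ - 1) * Δx)) *
        ∑ j, w j * K₁ ^ (-(1 / (γ - 1))) *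
          ((γ - 1) / γ * (h₁ + c j)) ^ (γ / (γ - 1)) →
      ρbar = (1 / Δx) *
        ∑ j, w j * ((γ - 1) / (γ * K₂) * (h₂ + c j)) ^ (1 / (γ - 1)) →
      ρebar = (1 / ((γ - 1) * Δx)) *
        ∑ j, w j * K₂ ^ (-(1 / (γ - 1))) *
          ((γ - 1) / γ * (h₂ + c j)) ^ (γ / (γ - 1)) →
      h₁ = h₂ ∧ K₁ = K₂ :=
  stmt_19_general γ hγ1 N hN w c hw Δx hΔx ρbar ρebar hρbar hratio
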